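/- Let F(ω,x)=(σω,f_{ω_0}(x)) be the skew product on Σ_m×X and g(ω,x)=c+φ(x) with c∈ℝ, φ∈C(X,ℝ). Then: (a) for every natural n and every 0<ε<1/2, P_n(F,g,ε) ≥ e^{nc}·m^n·P_n(f_0,…,f_{m−1},φ,ε); and (b) for every ε>0 there is a positive constant K(ε), depending only on ε, such that Q_n(F,g,ε) ≤ K(ε)·e^{nc}·m^n·Q_n(f_0,…,f_{m−1},φ,ε) for all natural n. Here P_n(F,g,ε) and Q_n(F,g,ε) are the classical separated-set and spanning-set partition sums of the single transformation F with potential g. -/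

import Mathlib

open Filter Topology MeasureTheory Set

namespace FSA

/-- `f_w = f_{w₁} ∘ ⋯ ∘ f_{w_k}` for the word `w = [w₁,…,w_k]`; the empty word acts as
the identity. -/
def wordMap {X : Type*} {ι : Type*} (f : ι → X → X) : List ι → X → X
  | [] => id
  | a :: t => f a ∘ wordMap f t

/-- `(S_wφ)(x) = Σ_{w'} φ(f_{w'}x)`, summing over the `|w|` words `w'` consisting of the
empty word and the proper suffixes of `w`. -/
noncomputable def birkhoff {X : Type*} {ι : Type*} (f : ι → X → X) (φ : X → ℝ)
    (w : List ι) (x : X) : ℝ :=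
  (w.tails.tail.map fun w' => φ (wordMap f w' x)).sum

section Core

variable {X : Type*} {ι : Type*}

/-- Bowen metric `d_w(x,y) = max_{w'≤w} d(f_{w'}x, f_{w'}y)`, the maximum ranging over all
suffixes of `w` (including `w` itself and the empty word). -/
noncomputable def bowenDist [PseudoMetricSpace X] (f : ι → X → X) (w : List ι) (x y : X) : ℝ :=
  (w.tails.map fun w' => dist (wordMap f w' x) (wordMap f w' y)).foldr max 0

/-- `E` is a `(w,ε)`-spanning set. -/
def IsSpanningSet [PseudoMetricSpace X] (f : ι → X → X) (w : List ι) (ε : ℝ)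
    (E : Finset X) : Prop :=
  ∀ x : X, ∃ y ∈ E, bowenDist f w x y < ε

/-- `E` is a `(w,ε)`-separated set. -/
def IsSeparatedSet [PseudoMetricSpace X] (f : ι → X → X) (w : List ι) (ε : ℝ)
    (E : Finset X) : Prop :=
  ∀ x ∈ E, ∀ y ∈ E, x ≠ y → ε ≤ bowenDist f w x y

/-- `Q_w(φ,ε) = inf { Σ_{x∈E} e^{(S_wφ)(x)} : E a (w,ε)-spanning set }`. -/
noncomputable def Qword [PseudoMetricSpace X] (f : ι → X → X) (φ : X → ℝ) (w : List ι)
    (ε : ℝ) : ℝ :=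
  sInf {s : ℝ | ∃ E : Finset X, IsSpanningSet f w ε E ∧
    s = ∑ x ∈ E, Real.exp (birkhoff f φ w x)}

/-- `P_w(φ,ε) = sup { Σ_{x∈E} e^{(S_wφ)(x)} : E a (w,ε)-separated set }`. -/
noncomputable def Pword [PseudoMetricSpace X] (f : ι → X → X) (φ : X → ℝ) (w : List ι)
    (ε : ℝ) : ℝ :=
  sSup {s : ℝ | ∃ E : Finset X, IsSeparatedSet f w ε E ∧
    s = ∑ x ∈ E, Real.exp (birkhoff f φ w x)}

/-- `Q_n(φ,ε) = m^{-n} Σ_{|w|=n} Q_w(φ,ε)`. -/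
noncomputable def Qn [PseudoMetricSpace X] [Fintype ι] (f : ι → X → X) (φ : X → ℝ)
    (n : ℕ) (ε : ℝ) : ℝ :=
  (1 / (Fintype.card ι : ℝ) ^ n) * ∑ w : Fin n → ι, Qword f φ (List.ofFn w) ε

/-- `P_n(φ,ε) = m^{-n} Σ_{|w|=n} P_w(φ,ε)`. -/
noncomputable def Pn [PseudoMetricSpace X] [Fintype ι] (f : ι → X → X) (φ : X → ℝ)
    (n : ℕ) (ε : ℝ) : ℝ :=
  (1 / (Fintype.card ι : ℝ) ^ n) * ∑ w : Fin n → ι, Pword f φ (List.ofFn w) ε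

/-- Topological pressure of the free semigroup action,
`P(f₀,…,f_{m-1},φ) = lim_{ε→0} limsup_{n→∞} (1/n) log Q_n(φ,ε)`.
Since the inner quantity is nonincreasing in `ε`, the limit as `ε → 0⁺` equals the
supremum over `ε > 0`. -/
noncomputable def pressure [PseudoMetricSpace X] [Fintype ι] (f : ι → X → X) (φ : X → ℝ) :
    EReal :=
  ⨆ (ε : ℝ) (_ : 0 < ε),
    Filter.limsup (fun n : ℕ => (↑(Real.log (Qn f φ n ε) / (n : ℝ)) : EReal)) atTop

end Core

section Sigma

open scoped Classical

/-- The two-sided full shift space `Σ_m` of sequences `(…,ω₋₁,ω₀,ω₁,…)` with entries in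
`{0,…,m-1}`. -/
def SigmaSpace (m : ℕ) : Type := ℤ → Fin m

/-- The metric `d(ω,ω') = 2^{-k}`, `k = min {|n| : ωₙ ≠ ω'ₙ}` on `Σ_m`. -/
noncomputable def sdist (m : ℕ) (ω ω' : SigmaSpace m) : ℝ :=
  if ω = ω' then 0
  else (1 / 2 : ℝ) ^ sInf {k : ℕ | ∃ n : ℤ, n.natAbs = k ∧ ω n ≠ ω' n}

lemma sdist_nonneg (m : ℕ) (ω ω' : SigmaSpace m) : 0 ≤ sdist m ω ω' := by
  unfold sdist
  split
  · exact le_refl 0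
  · positivity

lemma sdist_self (m : ℕ) (ω : SigmaSpace m) : sdist m ω ω = 0 := by
  simp [sdist]

lemma sdist_comm (m : ℕ) (ω ω' : SigmaSpace m) : sdist m ω ω' = sdist m ω' ω := by
  unfold sdist
  by_cases h : ω = ω'
  · simp [h]
  · rw [if_neg h, if_neg (fun h' => h h'.symm)]
    congr 2
    ext k
    exact ⟨fun ⟨n, h1, h2⟩ => ⟨n, h1, h2.symm⟩, fun ⟨n, h1, h2⟩ => ⟨n, h1, h2.symm⟩⟩

lemma sdist_triangle (m : ℕ) (x y z : SigmaSpace m) :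
    sdist m x z ≤ sdist m x y + sdist m y z := by
  by_cases hxz : x = z
  · rw [sdist, if_pos hxz]
    exact add_nonneg (sdist_nonneg m x y) (sdist_nonneg m y z)
  · by_cases hxy : x = y
    · subst hxy
      rw [sdist_self]
      simp
    · by_cases hyz : y = z
      · subst hyz
        rw [sdist_self]
        simp
      · unfold sdist
        rw [if_neg hxz, if_neg hxy, if_neg hyz]
        set S₀ := {k : ℕ | ∃ n : ℤ, n.natAbs = k ∧ x n ≠ z n} with hS₀def
        set S₁ := {k : ℕ | ∃ n : ℤ, n.natAbs = k ∧ x n ≠ y n} with hS₁def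
        set S₂ := {k : ℕ | ∃ n : ℤ, n.natAbs = k ∧ y n ≠ z n} with hS₂def
        have hne : S₀.Nonempty := by
          rcases Function.ne_iff.mp hxz with ⟨n, hn⟩
          exact ⟨n.natAbs, n, rfl, hn⟩
        obtain ⟨n, hn, hnxz⟩ := Nat.sInf_mem hne
        have hcase : x n ≠ y n ∨ y n ≠ z n := by
          by_contra hc
          push_neg at hc
          exact hnxz (hc.1.trans hc.2)
        rcases hcase with h | h
        · have h1 : sInf S₁ ≤ sInf S₀ := Nat.sInf_le ⟨n, hn, h⟩
          have h3 : (1 / 2 : ℝ) ^ sInf S₀ ≤ (1 / 2 : ℝ) ^ sInf S₁ :=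
            pow_le_pow_of_le_one (by norm_num) (by norm_num) h1
          have h2 : (0:ℝ) ≤ (1 / 2 : ℝ) ^ sInf S₂ := by positivity
          linarith
        · have h1 : sInf S₂ ≤ sInf S₀ := Nat.sInf_le ⟨n, hn, h⟩
          have h3 : (1 / 2 : ℝ) ^ sInf S₀ ≤ (1 / 2 : ℝ) ^ sInf S₂ :=
            pow_le_pow_of_le_one (by norm_num) (by norm_num) h1
          have h2 : (0:ℝ) ≤ (1 / 2 : ℝ) ^ sInf S₁ := by positivity
          linarith

lemma eq_of_sdist_eq_zero (m : ℕ) (x y : SigmaSpace m) (h : sdist m x y = 0) : x = y := by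
  by_contra hxy
  rw [sdist, if_neg hxy] at h
  have : (0:ℝ) < (1 / 2 : ℝ) ^ sInf {k : ℕ | ∃ n : ℤ, n.natAbs = k ∧ x n ≠ y n} := by
    positivity
  linarith

noncomputable instance (m : ℕ) : MetricSpace (SigmaSpace m) where
  dist := sdist m
  dist_self := sdist_self m
  dist_comm := sdist_comm m
  dist_triangle := sdist_triangle m
  eq_of_dist_eq_zero := eq_of_sdist_eq_zero m _ _

/-- The Bernoulli shift `(σω)ᵢ = ω_{i+1}` on `Σ_m`. -/
def shift (m : ℕ) : SigmaSpace m → SigmaSpace m := fun ω i => ω (i + 1)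

end Sigma

/-!
Along its first `n` steps the skew product `F` moves `x` by the word read off `ω_{n-1} … ω_0`
and adds `n c` to the Birkhoff sum. For (a), writing each word `v` onto `[0, n)` of one fixed
sequence turns `(v, ε)`-separated sets for all words into a single `(n, ε)`-separated set of `F`:
points over different words are already at distance `1` in the shift coordinate. For (b), a
point `(ω', y)` shadows `(ω, x)` for `n` steps as soon as `ω'` agrees with `ω` on `[-N, n + N)`,
where `2^{-N} < ε`, and `y` is `ε`-close to `x` along the word of `ω`. Choosing the `2N` collar
symbols freely and `y` from a spanning set for that word gives an `(n, ε)`-spanning set of `F`,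
at the cost of the factor `K = m^{2N}`.
-/

lemma foldr_max_zero_le {l : List ℝ} {r : ℝ} (hr : 0 ≤ r) (h : ∀ a ∈ l, a ≤ r) :
    l.foldr max 0 ≤ r := by
  induction l with
  | nil => exact hr
  | cons a t ih => exact max_le (h a List.mem_cons_self) (ih fun b hb => h b (.tail a hb))

lemma card_mul_div_card_add_one_lt (κ : Type*) [Fintype κ] {δ : ℝ} (hδ : 0 < δ) :
    Fintype.card κ * (δ / (Fintype.card κ + 1)) < δ := by
  rw [mul_div_assoc', div_lt_iff₀ (by positivity)]
  linarith

-- No boundedness is needed: an unbounded set has junk `sSup = 0` but elements above any bound.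
lemma sum_sSup_le {κ : Type*} [Fintype κ] {A : κ → Set ℝ} (hA : ∀ k, (A k).Nonempty) {B : ℝ}
    (h : ∀ s : κ → ℝ, (∀ k, s k ∈ A k) → ∑ k, s k ≤ B) : ∑ k, sSup (A k) ≤ B := by
  refine le_of_forall_pos_lt_add fun δ hδ => ?_
  have hη : 0 < δ / (Fintype.card κ + 1) := by positivity
  choose s hs hlt using fun k => Real.add_neg_lt_sSup (hA k) (neg_lt_zero.2 hη)
  have hsum := Finset.sum_le_sum fun k (_ : k ∈ Finset.univ) => (hlt k).le
  rw [Finset.sum_add_distrib, Finset.sum_const, Finset.card_univ, nsmul_eq_mul] at hsum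
  linarith [h s hs, card_mul_div_card_add_one_lt κ hδ]

lemma le_sum_sInf {κ : Type*} [Fintype κ] {A : κ → Set ℝ} (hA : ∀ k, (A k).Nonempty) {B : ℝ}
    (h : ∀ s : κ → ℝ, (∀ k, s k ∈ A k) → B ≤ ∑ k, s k) : B ≤ ∑ k, sInf (A k) := by
  refine le_of_forall_pos_lt_add fun δ hδ => ?_
  have hη : 0 < δ / (Fintype.card κ + 1) := by positivity
  choose s hs hlt using fun k => Real.lt_sInf_add_pos (hA k) hη
  have hsum := Finset.sum_le_sum fun k (_ : k ∈ Finset.univ) => (hlt k).le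
  rw [Finset.sum_add_distrib, Finset.sum_const, Finset.card_univ, nsmul_eq_mul] at hsum
  linarith [h s hs, card_mul_div_card_add_one_lt κ hδ]

lemma wordMap_const {Y ι : Type*} (T : Y → Y) (w : List ι) :
    wordMap (fun _ => T) w = T^[w.length] := by
  induction w with
  | nil => rfl
  | cons a t ih => rw [wordMap, ih, List.length_cons, Function.iterate_succ']

section BowenMetric

variable {X ι : Type*} [PseudoMetricSpace X] {f : ι → X → X}

def wordOrbit (f : ι → X → X) (w : List ι) (x : X) : Fin (w.length + 1) → X :=
  fun i => wordMap f (w.drop i) x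

lemma dist_wordMap_le_bowenDist {w w' : List ι} (hw' : w' <:+ w) (x y : X) :
    dist (wordMap f w' x) (wordMap f w' y) ≤ bowenDist f w x y :=
  List.le_max_of_le' 0 (List.mem_map_of_mem ((List.mem_tails _ _).2 hw')) le_rfl

lemma bowenDist_nonneg (w : List ι) (x y : X) : 0 ≤ bowenDist f w x y :=
  dist_nonneg.trans (dist_wordMap_le_bowenDist w.suffix_refl x y)

lemma bowenDist_eq_dist_wordOrbit (w : List ι) (x y : X) :
    bowenDist f w x y = dist (wordOrbit f w x) (wordOrbit f w y) := by
  apply le_antisymm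
  · refine foldr_max_zero_le dist_nonneg ?_
    simp only [List.mem_map, List.mem_tails]
    rintro _ ⟨w', hw', rfl⟩
    rw [List.suffix_iff_eq_drop.1 hw']
    exact dist_le_pi_dist (wordOrbit f w x) (wordOrbit f w y) ⟨_, by omega⟩
  · refine (dist_pi_le_iff (bowenDist_nonneg w x y)).2
      fun i => dist_wordMap_le_bowenDist (w.drop_suffix i) x y

lemma bowenDist_le_iff {w : List ι} {x y : X} {r : ℝ} (hr : 0 ≤ r) :
    bowenDist f w x y ≤ r ↔
      ∀ i ≤ w.length, dist (wordMap f (w.drop i) x) (wordMap f (w.drop i) y) ≤ r := by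
  rw [bowenDist_eq_dist_wordOrbit, dist_pi_le_iff hr, Fin.forall_iff]
  simp only [Nat.lt_succ_iff]
  rfl

lemma bowenDist_lt_iff {w : List ι} {x y : X} {r : ℝ} (hr : 0 < r) :
    bowenDist f w x y < r ↔
      ∀ i ≤ w.length, dist (wordMap f (w.drop i) x) (wordMap f (w.drop i) y) < r := by
  rw [bowenDist_eq_dist_wordOrbit, dist_pi_lt_iff hr, Fin.forall_iff]
  simp only [Nat.lt_succ_iff]
  rfl

lemma dist_iterate_le_bowenDist_const (T : X → X) {w : List ι} {j : ℕ} (hj : j ≤ w.length)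
    (p q : X) : dist (T^[j] p) (T^[j] q) ≤ bowenDist (fun _ => T) w p q := by
  simpa [wordMap_const, Nat.sub_sub_self hj] using
    dist_wordMap_le_bowenDist (f := fun _ => T) (w.drop_suffix (w.length - j)) p q

lemma bowenDist_const_lt (T : X → X) {w : List ι} {p q : X} {r : ℝ} (hr : 0 < r)
    (h : ∀ j ≤ w.length, dist (T^[j] p) (T^[j] q) < r) : bowenDist (fun _ => T) w p q < r := by
  refine (bowenDist_lt_iff hr).2 fun i _ => ?_
  simpa [wordMap_const] using h (w.length - i) (Nat.sub_le _ _)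

lemma continuous_wordMap (hf : ∀ i, Continuous (f i)) (w : List ι) :
    Continuous (wordMap f w) := by
  induction w with
  | nil => exact continuous_id
  | cons a t ih => exact (hf a).comp ih

lemma exists_isSpanningSet [CompactSpace X] (hf : ∀ i, Continuous (f i)) (w : List ι)
    {ε : ℝ} (hε : 0 < ε) : ∃ E, IsSpanningSet f w ε E := by
  have hcont : Continuous (wordOrbit f w) :=
    continuous_pi fun i => continuous_wordMap hf (w.drop i)
  obtain ⟨E, -, hE⟩ := isCompact_univ.elim_nhds_subcover
    (fun y => wordOrbit f w ⁻¹' Metric.ball (wordOrbit f w y) ε)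
    (fun y _ => hcont.continuousAt.preimage_mem_nhds (Metric.ball_mem_nhds _ hε))
  refine ⟨E, fun x => ?_⟩
  obtain ⟨y, hy, hxy⟩ := mem_iUnion₂.1 (hE (mem_univ x))
  exact ⟨y, hy, by rwa [bowenDist_eq_dist_wordOrbit]⟩

lemma card_le_card_of_isSeparatedSet_of_isSpanningSet {w : List ι} {ε : ℝ} {E S : Finset X}
    (hE : IsSeparatedSet f w ε E) (hS : IsSpanningSet f w (ε / 2) S) : E.card ≤ S.card := by
  choose y hyS hy using hS
  refine Finset.card_le_card_of_injOn y (fun x _ => hyS x) fun x₁ h₁ x₂ h₂ hy₁₂ => ?_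
  by_contra hne
  have hsep := hE x₁ h₁ x₂ h₂ hne
  have h₁ := hy x₁
  have h₂ := hy x₂
  rw [bowenDist_eq_dist_wordOrbit] at hsep h₁ h₂
  rw [hy₁₂] at h₁
  linarith [dist_triangle_right (wordOrbit f w x₁) (wordOrbit f w x₂) (wordOrbit f w (y x₂))]

end BowenMetric

section Birkhoff

variable {X ι : Type*} {f : ι → X → X} {φ : X → ℝ}

lemma birkhoff_nil (x : X) : birkhoff f φ [] x = 0 := rfl

lemma birkhoff_cons (a : ι) (w : List ι) (x : X) :
    birkhoff f φ (a :: w) x = φ (wordMap f w x) + birkhoff f φ w x := by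
  cases w <;> simp [birkhoff]

lemma birkhoff_le {M : ℝ} (hM : ∀ x, φ x ≤ M) (w : List ι) (x : X) :
    birkhoff f φ w x ≤ w.length * M := by
  induction w with
  | nil => simp [birkhoff_nil]
  | cons a t ih =>
    rw [birkhoff_cons, List.length_cons, Nat.cast_succ]
    linarith [hM (wordMap f t x)]

end Birkhoff

section PartitionSums

variable {X ι : Type*} [PseudoMetricSpace X] {f : ι → X → X} {φ : X → ℝ}

lemma sum_le_Pword {M : ℝ} (hM : ∀ x, φ x ≤ M) {w : List ι} {ε : ℝ} {E S : Finset X}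
    (hS : IsSpanningSet f w (ε / 2) S) (hE : IsSeparatedSet f w ε E) :
    ∑ x ∈ E, Real.exp (birkhoff f φ w x) ≤ Pword f φ w ε := by
  refine le_csSup ⟨S.card * Real.exp (w.length * M), ?_⟩ ⟨E, hE, rfl⟩
  rintro _ ⟨E', hE', rfl⟩
  calc ∑ x ∈ E', Real.exp (birkhoff f φ w x) ≤ E'.card • Real.exp (w.length * M) :=
        Finset.sum_le_card_nsmul _ _ _ fun x _ => Real.exp_le_exp.2 (birkhoff_le hM w x)
    _ ≤ S.card * Real.exp (w.length * M) := by
        rw [nsmul_eq_mul]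
        exact mul_le_mul_of_nonneg_right
          (by exact_mod_cast card_le_card_of_isSeparatedSet_of_isSpanningSet hE' hS) (by positivity)

lemma Qword_le_sum {w : List ι} {ε : ℝ} {E : Finset X} (hE : IsSpanningSet f w ε E) :
    Qword f φ w ε ≤ ∑ x ∈ E, Real.exp (birkhoff f φ w x) :=
  csInf_le ⟨0, by rintro _ ⟨E', -, rfl⟩; positivity⟩ ⟨E, hE, rfl⟩

lemma Pn_eq_Pword [Fintype ι] [Unique ι] (φ : X → ℝ) (n : ℕ) (ε : ℝ) :
    Pn f φ n ε = Pword f φ (List.ofFn (default : Fin n → ι)) ε := by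
  simp [Pn]

lemma Qn_eq_Qword [Fintype ι] [Unique ι] (φ : X → ℝ) (n : ℕ) (ε : ℝ) :
    Qn f φ n ε = Qword f φ (List.ofFn (default : Fin n → ι)) ε := by
  simp [Qn]

end PartitionSums

section SkewProduct

variable {m : ℕ}

def skewProduct {X : Type*} (f : Fin m → X → X) : SigmaSpace m × X → SigmaSpace m × X :=
  fun p => (shift m p.1, f (p.1 0) p.2)

def itinerary (ω : SigmaSpace m) : ℕ → List (Fin m)
  | 0 => []
  | j + 1 => ω j :: itinerary ω j

lemma length_itinerary (ω : SigmaSpace m) (j : ℕ) : (itinerary ω j).length = j := by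
  induction j with
  | zero => rfl
  | succ j ih => simp [itinerary, ih]

lemma itinerary_eq_ofFn (ω : SigmaSpace m) (n : ℕ) :
    itinerary ω n = List.ofFn fun i : Fin n => ω (i.rev : ℕ) := by
  induction n with
  | zero => rfl
  | succ n ih => simp [itinerary, ih, List.ofFn_succ]

lemma itinerary_eq_drop (ω : SigmaSpace m) {j n : ℕ} (h : j ≤ n) :
    itinerary ω j = (itinerary ω n).drop (n - j) := by
  induction n, h using Nat.le_induction with
  | base => simp
  | succ n hjn ih => rw [ih, Nat.sub_add_comm hjn]; rfl

lemma drop_itinerary (ω : SigmaSpace m) {i n : ℕ} (h : i ≤ n) :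
    (itinerary ω n).drop i = itinerary ω (n - i) := by
  rw [itinerary_eq_drop ω (Nat.sub_le n i), Nat.sub_sub_self h]

lemma itinerary_congr {ω ω' : SigmaSpace m} {j : ℕ} (h : ∀ i < j, ω i = ω' i) :
    itinerary ω j = itinerary ω' j := by
  induction j with
  | zero => rfl
  | succ j ih => rw [itinerary, itinerary, h j j.lt_succ_self, ih fun i hi => h i (by omega)]

lemma shift_iterate_apply (j : ℕ) (ω : SigmaSpace m) (k : ℤ) :
    (shift m)^[j] ω k = ω (k + j) := by
  induction j generalizing ω with
  | zero => simp
  | succ j ih =>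
    rw [Function.iterate_succ_apply, ih]
    simp only [shift]
    push_cast
    ring_nf

variable {X : Type*} {f : Fin m → X → X}

lemma skewProduct_iterate (j : ℕ) (ω : SigmaSpace m) (x : X) :
    (skewProduct f)^[j] (ω, x) = ((shift m)^[j] ω, wordMap f (itinerary ω j) x) := by
  induction j with
  | zero => rfl
  | succ j ih =>
    rw [Function.iterate_succ_apply', ih, Function.iterate_succ_apply']
    simp [skewProduct, shift_iterate_apply, itinerary, wordMap]

lemma birkhoff_const {Y ι : Type*} (T : Y → Y) (g : Y → ℝ) (w : List ι) (p : Y) :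
    birkhoff (fun _ => T) g w p = ∑ j ∈ Finset.range w.length, g (T^[j] p) := by
  induction w with
  | nil => rfl
  | cons a t ih => rw [birkhoff_cons, ih, wordMap_const, List.length_cons,
      Finset.sum_range_succ, add_comm]

lemma birkhoff_itinerary (φ : X → ℝ) (ω : SigmaSpace m) (n : ℕ) (x : X) :
    birkhoff f φ (itinerary ω n) x = ∑ j ∈ Finset.range n, φ (wordMap f (itinerary ω j) x) := by
  induction n with
  | zero => rfl
  | succ n ih => rw [itinerary, birkhoff_cons, ih, Finset.sum_range_succ, add_comm]

lemma birkhoff_skewProduct {ι : Type*} (φ : X → ℝ) (c : ℝ) (w : List ι) (ω : SigmaSpace m)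
    (x : X) :
    birkhoff (fun _ => skewProduct f) (fun p => c + φ p.2) w (ω, x) =
      w.length * c + birkhoff f φ (itinerary ω w.length) x := by
  simp [birkhoff_const, birkhoff_itinerary, skewProduct_iterate, Finset.sum_add_distrib]

lemma dist_le_of_eq_of_natAbs_lt {N : ℕ} {ω ω' : SigmaSpace m}
    (h : ∀ k : ℤ, k.natAbs < N → ω k = ω' k) : dist ω ω' ≤ (1 / 2 : ℝ) ^ N := by
  change sdist m ω ω' ≤ _
  unfold sdist
  split_ifs with hω
  · positivity
  · obtain ⟨k, hk⟩ := Function.ne_iff.1 hω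
    refine pow_le_pow_of_le_one (by norm_num) (by norm_num) (le_csInf ⟨_, k, rfl, hk⟩ ?_)
    rintro _ ⟨k, rfl, hk⟩
    by_contra hlt
    exact hk (h k (not_le.1 hlt))

lemma dist_eq_one_of_apply_zero_ne {ω ω' : SigmaSpace m} (h : ω 0 ≠ ω' 0) : dist ω ω' = 1 := by
  have hne : ω ≠ ω' := by rintro rfl; exact h rfl
  change sdist m ω ω' = 1
  have h0 : sInf {k : ℕ | ∃ n : ℤ, n.natAbs = k ∧ ω n ≠ ω' n} = 0 :=
    Nat.sInf_eq_zero.2 (Or.inl ⟨0, rfl, h⟩)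
  rw [sdist, if_neg hne, h0, pow_zero]

variable {X ι : Type*} [PseudoMetricSpace X] {f : Fin m → X → X}

lemma bowenDist_le_bowenDist_skewProduct (w : List ι) (ω : SigmaSpace m) (x y : X) :
    bowenDist f (itinerary ω w.length) x y ≤
      bowenDist (fun _ => skewProduct f) w (ω, x) (ω, y) := by
  refine (bowenDist_le_iff (bowenDist_nonneg _ _ _)).2 fun i hi => ?_
  rw [length_itinerary] at hi
  rw [drop_itinerary ω hi]
  calc _ = dist ((skewProduct f)^[w.length - i] (ω, x))
        ((skewProduct f)^[w.length - i] (ω, y)) := by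
        rw [skewProduct_iterate, skewProduct_iterate, Prod.dist_eq, dist_self,
          max_eq_right dist_nonneg]
    _ ≤ _ := dist_iterate_le_bowenDist_const _ (Nat.sub_le _ _) _ _

lemma one_le_bowenDist_skewProduct {w : List ι} {ω ω' : SigmaSpace m} {k : ℕ}
    (hk : k < w.length) (h : ω k ≠ ω' k) (x y : X) :
    1 ≤ bowenDist (fun _ => skewProduct f) w (ω, x) (ω', y) :=
  calc 1 = dist ((shift m)^[k] ω) ((shift m)^[k] ω') :=
        (dist_eq_one_of_apply_zero_ne (by simpa [shift_iterate_apply] using h)).symm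
    _ ≤ dist ((skewProduct f)^[k] (ω, x)) ((skewProduct f)^[k] (ω', y)) := by
        rw [skewProduct_iterate, skewProduct_iterate, Prod.dist_eq]
        exact le_max_left _ _
    _ ≤ _ := dist_iterate_le_bowenDist_const _ hk.le _ _

lemma bowenDist_skewProduct_lt {w : List ι} {ω ω' : SigmaSpace m} {x y : X} {N : ℕ} {ε : ℝ}
    (hN : (1 / 2 : ℝ) ^ N < ε) (hω : ∀ k : ℤ, -N ≤ k → k < w.length + N → ω k = ω' k)
    (hxy : bowenDist f (itinerary ω w.length) x y < ε) :
    bowenDist (fun _ => skewProduct f) w (ω, x) (ω', y) < ε := by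
  refine bowenDist_const_lt _ ((by positivity : (0 : ℝ) < _).trans hN) fun j hj => ?_
  rw [skewProduct_iterate, skewProduct_iterate, Prod.dist_eq]
  refine max_lt ((dist_le_of_eq_of_natAbs_lt fun k hk => ?_).trans_lt hN) ?_
  · dsimp only
    rw [shift_iterate_apply, shift_iterate_apply]
    exact hω _ (by omega) (by omega)
  · rw [← itinerary_congr fun i hi => hω i (by omega) (by omega),
      itinerary_eq_drop ω hj]
    exact (dist_wordMap_le_bowenDist (List.drop_suffix _ _) x y).trans_lt hxy

end SkewProduct

section Splice

variable {m n : ℕ}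

noncomputable def splice (v : Fin n → Fin m) (a : SigmaSpace m) : SigmaSpace m :=
  Function.extend (fun i : Fin n => ((i.rev : ℕ) : ℤ)) v a

lemma splice_apply_rev (v : Fin n → Fin m) (a : SigmaSpace m) (i : Fin n) :
    splice v a (i.rev : ℕ) = v i :=
  Function.Injective.extend_apply
    (fun i j h => Fin.rev_injective (Fin.ext (by exact_mod_cast h))) v a i

lemma splice_apply_of_lt_or_le (v : Fin n → Fin m) (a : SigmaSpace m) {k : ℤ}
    (hk : k < 0 ∨ n ≤ k) : splice v a k = a k :=
  Function.extend_apply' _ _ _ fun ⟨i, hi⟩ => by have := i.rev.isLt; omega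

lemma itinerary_splice (v : Fin n → Fin m) (a : SigmaSpace m) :
    itinerary (splice v a) n = List.ofFn v := by
  rw [itinerary_eq_ofFn]
  exact congrArg List.ofFn (funext (splice_apply_rev v a))

noncomputable def patch (C : Finset ℤ) (u : C → Fin m) (a : SigmaSpace m) : SigmaSpace m :=
  Function.extend Subtype.val u a

lemma patch_apply_of_mem {C : Finset ℤ} (u : C → Fin m) (a : SigmaSpace m) {k : ℤ} (hk : k ∈ C) :
    patch C u a k = u ⟨k, hk⟩ :=
  Subtype.val_injective.extend_apply u a ⟨k, hk⟩

end Splice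

section Constructions

variable {m : ℕ} {X ι : Type*} [PseudoMetricSpace X] {f : Fin m → X → X}

lemma exists_isSeparatedSet_skewProduct (φ : X → ℝ) (c : ℝ) (a : SigmaSpace m) {w : List ι}
    {n : ℕ} (hw : w.length = n) {ε : ℝ} (hε : ε ≤ 1) (E : (Fin n → Fin m) → Finset X)
    (hE : ∀ v, IsSeparatedSet f (List.ofFn v) ε (E v)) :
    ∃ S, IsSeparatedSet (fun _ => skewProduct f) w ε S ∧
      ∑ p ∈ S, Real.exp (birkhoff (fun _ => skewProduct f) (fun p => c + φ p.2) w p) =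
        Real.exp (n * c) * ∑ v, ∑ x ∈ E v, Real.exp (birkhoff f φ (List.ofFn v) x) := by
  classical
  subst hw
  let ψ : (Σ _ : Fin w.length → Fin m, X) → SigmaSpace m × X := fun q => (splice q.1 a, q.2)
  have hψ : Set.InjOn ψ ↑(Finset.univ.sigma E) := by
    rintro ⟨v, x⟩ - ⟨v', x'⟩ - h
    obtain ⟨hv, rfl⟩ := Prod.mk.injEq _ _ _ _ ▸ h
    obtain rfl : v = v' :=
      List.ofFn_injective (by rw [← itinerary_splice v a, hv, itinerary_splice])
    rfl
  refine ⟨(Finset.univ.sigma E).image ψ, ?_, ?_⟩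
  · simp only [IsSeparatedSet, Finset.mem_image, Finset.mem_sigma, Finset.mem_univ, true_and]
    rintro _ ⟨⟨v, x⟩, hx, rfl⟩ _ ⟨⟨v', x'⟩, hx', rfl⟩ hne
    by_cases hv : v = v'
    · subst hv
      have hxx' : x ≠ x' := by rintro rfl; exact hne rfl
      calc ε ≤ bowenDist f (List.ofFn v) x x' := hE v x hx x' hx' hxx'
        _ ≤ _ := by
          simpa [itinerary_splice] using bowenDist_le_bowenDist_skewProduct w (splice v a) x x'
    · obtain ⟨i, hi⟩ := Function.ne_iff.1 hv
      refine hε.trans (one_le_bowenDist_skewProduct i.rev.isLt ?_ x x')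
      rwa [splice_apply_rev, splice_apply_rev]
  · rw [Finset.sum_image hψ, Finset.sum_sigma, Finset.mul_sum]
    refine Finset.sum_congr rfl fun v _ => ?_
    rw [Finset.mul_sum]
    refine Finset.sum_congr rfl fun x _ => ?_
    simp [ψ, birkhoff_skewProduct, itinerary_splice, Real.exp_add]

lemma exists_isSpanningSet_skewProduct (φ : X → ℝ) (c : ℝ) (a : SigmaSpace m) {w : List ι}
    {n : ℕ} (hw : w.length = n) {N : ℕ} {ε : ℝ} (hN : (1 / 2 : ℝ) ^ N < ε)
    (E : (Fin n → Fin m) → Finset X) (hE : ∀ v, IsSpanningSet f (List.ofFn v) ε (E v)) :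
    ∃ S, IsSpanningSet (fun _ => skewProduct f) w ε S ∧
      ∑ p ∈ S, Real.exp (birkhoff (fun _ => skewProduct f) (fun p => c + φ p.2) w p) ≤
        (m : ℝ) ^ (2 * N) * Real.exp (n * c) *
          ∑ v, ∑ x ∈ E v, Real.exp (birkhoff f φ (List.ofFn v) x) := by
  classical
  subst hw
  -- besides the itinerary, only the symbols on this collar matter at scale `ε`
  obtain ⟨C, hCcard, hC⟩ : ∃ C : Finset ℤ, C.card ≤ 2 * N ∧
      ∀ k : ℤ, -N ≤ k → k < w.length + N → ¬(0 ≤ k ∧ k < w.length) → k ∈ C :=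
    ⟨Finset.Ico (-N : ℤ) 0 ∪ Finset.Ico (w.length : ℤ) (w.length + N),
      (Finset.card_union_le _ _).trans (by simp; omega), fun k _ _ _ => by simp; omega⟩
  let ψ : (Σ _ : (Fin w.length → Fin m) × (C → Fin m), X) → SigmaSpace m × X :=
    fun q => (splice q.1.1 (patch C q.1.2 a), q.2)
  refine ⟨(Finset.univ.sigma fun q => E q.1).image ψ, ?_, ?_⟩
  · rintro ⟨ω, x⟩
    let v : Fin w.length → Fin m := fun i => ω (i.rev : ℕ)
    obtain ⟨y, hy, hxy⟩ := hE v x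
    refine ⟨ψ ⟨(v, fun k => ω k), y⟩,
      Finset.mem_image_of_mem _ (Finset.mem_sigma.2 ⟨Finset.mem_univ _, hy⟩), ?_⟩
    refine bowenDist_skewProduct_lt hN (fun k hk₁ hk₂ => ?_) (by rwa [itinerary_eq_ofFn])
    dsimp only [ψ]
    by_cases hk : 0 ≤ k ∧ k < w.length
    · obtain ⟨i, rfl⟩ : ∃ i : Fin w.length, ((i.rev : ℕ) : ℤ) = k :=
        ⟨Fin.rev ⟨k.toNat, by omega⟩, by simp; omega⟩
      exact (splice_apply_rev v _ i).symm
    · rw [splice_apply_of_lt_or_le _ _ (by omega)]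
      exact (patch_apply_of_mem (fun k : C => ω k) a (hC k hk₁ hk₂ hk)).symm
  · have hcard : (Fintype.card (C → Fin m) : ℝ) ≤ (m : ℝ) ^ (2 * N) := by
      rw [Fintype.card_fun, Fintype.card_coe, Fintype.card_fin, Nat.cast_pow]
      exact pow_le_pow_right₀ (by exact_mod_cast (a 0).pos) hCcard
    have hψ : ∀ v u x, Real.exp (birkhoff (fun _ => skewProduct f) (fun p => c + φ p.2) w
        (ψ ⟨(v, u), x⟩)) = Real.exp (w.length * c) * Real.exp (birkhoff f φ (List.ofFn v) x) :=
      fun v u x => by rw [birkhoff_skewProduct, itinerary_splice, Real.exp_add]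
    calc _ ≤ ∑ q ∈ Finset.univ.sigma fun q => E q.1,
          Real.exp (birkhoff (fun _ => skewProduct f) (fun p => c + φ p.2) w (ψ q)) :=
          Finset.sum_image_le_of_nonneg (f := fun p => Real.exp (birkhoff _ _ w p))
            fun _ _ => (Real.exp_pos _).le
      _ = ∑ v, ∑ _u : C → Fin m,
          Real.exp (w.length * c) * ∑ x ∈ E v, Real.exp (birkhoff f φ (List.ofFn v) x) := by
          simp only [Finset.sum_sigma, Fintype.sum_prod_type, hψ, Finset.mul_sum]
      _ = Fintype.card (C → Fin m) *
          ∑ v, Real.exp (w.length * c) * ∑ x ∈ E v, Real.exp (birkhoff f φ (List.ofFn v) x) := by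
          rw [Finset.sum_comm, Finset.sum_const, Finset.card_univ, nsmul_eq_mul]
      _ ≤ _ := by
          rw [← Finset.mul_sum, ← mul_assoc]
          have hsum : 0 ≤ ∑ v, ∑ x ∈ E v, Real.exp (birkhoff f φ (List.ofFn v) x) :=
            Finset.sum_nonneg fun v _ => Finset.sum_nonneg fun x _ => (Real.exp_pos _).le
          exact mul_le_mul_of_nonneg_right
            (mul_le_mul_of_nonneg_right hcard (Real.exp_pos _).le) hsum

end Constructions

section PartitionSumEstimates

variable {m : ℕ} {X : Type*} [PseudoMetricSpace X] [CompactSpace X] {f : Fin m → X → X}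

theorem exp_mul_pow_mul_Pn_le_Pn_skewProduct (hm : 0 < m) (hf : ∀ i, Continuous (f i))
    {φ : X → ℝ} (hφ : Continuous φ) (c : ℝ) (n : ℕ) {ε : ℝ} (hε : 0 < ε) (hε₁ : ε ≤ 1) :
    Real.exp (n * c) * (m : ℝ) ^ n * Pn f φ n ε ≤
      Pn (fun _ : Fin 1 => skewProduct f) (fun p => c + φ p.2) n ε := by
  obtain ⟨M, hM⟩ := (isCompact_range hφ).bddAbove
  have hw : (List.ofFn (default : Fin n → Fin 1)).length = n := List.length_ofFn
  -- a finite `(ε / 2)`-spanning set of `F` bounds its separated sums, so `Pword` is no junk `sSup`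
  obtain ⟨N, hN⟩ := exists_pow_lt_of_lt_one (half_pos hε) one_half_lt_one
  choose E₀ hE₀ using fun v : Fin n → Fin m => exists_isSpanningSet hf (List.ofFn v) (half_pos hε)
  obtain ⟨S₀, hS₀, -⟩ := exists_isSpanningSet_skewProduct φ c (fun _ => ⟨0, hm⟩) hw hN E₀ hE₀
  have hmn : (m : ℝ) ^ n ≠ 0 := by positivity
  rw [Pn_eq_Pword (f := fun _ => skewProduct f), Pn, Fintype.card_fin, mul_assoc,
    one_div_mul_eq_div, mul_div_cancel₀ _ hmn, ← le_div_iff₀' (Real.exp_pos _)]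
  refine sum_sSup_le (fun v => ?_) fun s hs => ?_
  · exact ⟨0, ∅, by simp [IsSeparatedSet], by simp⟩
  choose E hE hsE using hs
  obtain ⟨S, hS, hsum⟩ := exists_isSeparatedSet_skewProduct φ c (fun _ => ⟨0, hm⟩) hw hε₁ E hE
  rw [le_div_iff₀' (Real.exp_pos _), Finset.sum_congr rfl fun v _ => hsE v, ← hsum]
  exact sum_le_Pword (M := c + M) (fun p => by linarith [hM ⟨p.2, rfl⟩]) hS₀ hS

theorem exists_Qn_skewProduct_le (hm : 0 < m) (hf : ∀ i, Continuous (f i)) (φ : X → ℝ)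
    (c : ℝ) {ε : ℝ} (hε : 0 < ε) :
    ∃ K : ℝ, 0 < K ∧ ∀ n : ℕ, Qn (fun _ : Fin 1 => skewProduct f) (fun p => c + φ p.2) n ε ≤
      K * Real.exp (n * c) * (m : ℝ) ^ n * Qn f φ n ε := by
  obtain ⟨N, hN⟩ := exists_pow_lt_of_lt_one hε one_half_lt_one
  refine ⟨(m : ℝ) ^ (2 * N), by positivity, fun n => ?_⟩
  have hw : (List.ofFn (default : Fin n → Fin 1)).length = n := List.length_ofFn
  have hmn : (m : ℝ) ^ n ≠ 0 := by positivity
  have hK : 0 < (m : ℝ) ^ (2 * N) * Real.exp (n * c) := by positivity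
  rw [Qn_eq_Qword (f := fun _ => skewProduct f), Qn, Fintype.card_fin, mul_assoc _ ((m : ℝ) ^ n),
    one_div_mul_eq_div, mul_div_cancel₀ _ hmn, ← div_le_iff₀' hK]
  refine le_sum_sInf (fun v => ?_) fun s hs => ?_
  · obtain ⟨E, hE⟩ := exists_isSpanningSet hf (List.ofFn v) hε
    exact ⟨_, E, hE, rfl⟩
  choose E hE hsE using hs
  obtain ⟨S, hS, hsum⟩ := exists_isSpanningSet_skewProduct φ c (fun _ => ⟨0, hm⟩) hw hN E hE
  rw [div_le_iff₀' hK, Finset.sum_congr rfl fun v _ => hsE v]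
  exact (Qword_le_sum hS).trans hsum

end PartitionSumEstimates

theorem stmt_18_general {X : Type*} [MetricSpace X] [CompactSpace X]
    {m : ℕ} (hm : 0 < m)
    (f : Fin m → X → X) (hf : ∀ i, Continuous (f i))
    (φ : X → ℝ) (hφ : Continuous φ) (c : ℝ)
    (F : SigmaSpace m × X → SigmaSpace m × X)
    (hF : F = fun p => (shift m p.1, f (p.1 0) p.2))
    (g : SigmaSpace m × X → ℝ) (hg : g = fun p => c + φ p.2) :
    (∀ (n : ℕ) (ε : ℝ), 0 < ε → ε < 1 / 2 →
      Real.exp ((n : ℝ) * c) * (m : ℝ) ^ n * Pn f φ n ε ≤ Pn (fun _ : Fin 1 => F) g n ε) ∧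
    (∀ ε : ℝ, 0 < ε → ∃ K : ℝ, 0 < K ∧ ∀ n : ℕ,
      Qn (fun _ : Fin 1 => F) g n ε ≤
        K * Real.exp ((n : ℝ) * c) * (m : ℝ) ^ n * Qn f φ n ε) := by
  subst hF hg
  exact ⟨fun n ε hε hε₂ => exp_mul_pow_mul_Pn_le_Pn_skewProduct hm hf hφ c n hε (by linarith),
    fun ε hε => exists_Qn_skewProduct_le hm hf φ c hε⟩

/-- For the skew product `F(ω,x) = (σω, f_{ω₀}(x))` and
`g(ω,x) = c + φ(x)`: (a) for every `n` and every `0 < ε < 1/2`,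
`P_n(F,g,ε) ≥ e^{nc} mⁿ P_n(f₀,…,f_{m-1},φ,ε)`; (b) for every `ε > 0` there is `K(ε) > 0`
with `Q_n(F,g,ε) ≤ K(ε) e^{nc} mⁿ Q_n(f₀,…,f_{m-1},φ,ε)` for all `n`.
Here the partition sums of the single transformation `F` are realized as those of the free
semigroup action with the one generator `F`. -/
theorem stmt_18 {X : Type*} [MetricSpace X] [CompactSpace X] [Nonempty X]
    {m : ℕ} (hm : 0 < m)
    (f : Fin m → X → X) (hf : ∀ i, Continuous (f i))
    (φ : X → ℝ) (hφ : Continuous φ) (c : ℝ)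
    (F : SigmaSpace m × X → SigmaSpace m × X)
    (hF : F = fun p => (shift m p.1, f (p.1 0) p.2))
    (g : SigmaSpace m × X → ℝ) (hg : g = fun p => c + φ p.2) :
    (∀ (n : ℕ) (ε : ℝ), 0 < ε → ε < 1 / 2 →
      Real.exp ((n : ℝ) * c) * (m : ℝ) ^ n * Pn f φ n ε ≤ Pn (fun _ : Fin 1 => F) g n ε) ∧
    (∀ ε : ℝ, 0 < ε → ∃ K : ℝ, 0 < K ∧ ∀ n : ℕ,
      Qn (fun _ : Fin 1 => F) g n ε ≤
        K * Real.exp ((n : ℝ) * c) * (m : ℝ) ^ n * Qn f φ n ε) :=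
  stmt_18_general hm f hf φ hφ c F hF g hg

end FSA
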